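/- Let β : ℤ → ℂ be finitely supported and h : (0,∞) → ℂ measurable with ∫₀^∞ |h(ρ)| (ρ + ρ²) dρ < ∞. Let ψ be the unitary inverse Fourier transform of the divergence free wavelet ψ̂(ξ) = −i (Σ_m β_m e^{i m θ_ξ}) h(|ξ|) e_θ(ξ), with e_θ(ξ) = (ξ₂, −ξ₁)/|ξ|. Then ψ is continuously differentiable and its vorticity (scalar curl) has the closed frequency-domain form ∂ψ₂/∂x₁ (x) − ∂ψ₁/∂x₂ (x) = −(2π)^{−1} ∫_{ℝ²} |ξ| (Σ_m β_m e^{i m θ_ξ}) h(|ξ|) e^{i⟨ξ,x⟩} dξ for all x ∈ ℝ². -/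

import Mathlib

/-!
Componentwise, `ψ` is the inverse Fourier transform of `a(ξ) (e_θ)_j(ξ)` with
`a(ξ) = -i (∑ β_m e^{imθ_ξ}) h(|ξ|)`. In polar coordinates the hypothesis on `h` says exactly that
`a` and `|ξ| a` are integrable on `ℝ²`, so one may differentiate under the integral sign: `ψ` is
`C¹` and `∂_v ψ_j` is the transform of `i⟨ξ, v⟩ a (e_θ)_j`. The vorticity thus has symbol
`i (ξ₁ (e_θ)₂ - ξ₂ (e_θ)₁) a = -i |ξ| a`, and `(-i)(-i) = -1`.
-/

open MeasureTheory RealInnerProductSpace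

/-- The angular unit vector `e_θ(ξ) = (ξ₂, -ξ₁)/|ξ|`, viewed as a complex vector. -/
noncomputable def eThetaC (ξ : EuclideanSpace ℝ (Fin 2)) : Fin 2 → ℂ :=
  ![((ξ 1 / ‖ξ‖ : ℝ) : ℂ), ((-ξ 0 / ‖ξ‖ : ℝ) : ℂ)]

noncomputable def polarAngle (v : EuclideanSpace ℝ (Fin 2)) : ℝ :=
  Complex.arg ((v 0 : ℂ) + (v 1 : ℂ) * Complex.I)

open Complex Real Set

open scoped FourierTransform

variable {V : Type*} [NormedAddCommGroup V] [InnerProductSpace ℝ V]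

-- Mathlib's vector Fourier integrals carry the character `𝐞 (-L ξ x) = exp (-2πi L ξ x)`;
-- with this `L` they become `∫ exp (i⟪ξ, x⟫) c ξ`.
noncomputable def expInnerPairing : V →L[ℝ] V →L[ℝ] ℝ := -(2 * π)⁻¹ • innerSL ℝ

lemma expInnerPairing_apply (ξ x : V) : expInnerPairing ξ x = -(2 * π)⁻¹ * ⟪ξ, x⟫ := rfl

lemma fourierChar_neg_expInnerPairing (ξ x : V) :
    ((𝐞 (-expInnerPairing ξ x) : Circle) : ℂ) = exp (I * ((⟪ξ, x⟫ : ℝ) : ℂ)) := by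
  rw [Real.fourierChar_apply, expInnerPairing_apply]
  congr 1
  push_cast
  field_simp

variable [MeasurableSpace V] {μ : Measure V}

lemma integral_exp_inner_mul_eq_fourierIntegral (c : V → ℂ) (x : V) :
    ∫ ξ, exp (I * ((⟪ξ, x⟫ : ℝ) : ℂ)) * c ξ ∂μ =
      VectorFourier.fourierIntegral 𝐞 μ expInnerPairing.toLinearMap₁₂ c x := by
  simp only [VectorFourier.fourierIntegral, ContinuousLinearMap.toLinearMap₁₂_apply_apply_apply,
    Circle.smul_def, fourierChar_neg_expInnerPairing, smul_eq_mul]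

variable [BorelSpace V] {c : V → ℂ}

lemma integrable_exp_inner_mul (hc : Integrable c μ) (x : V) :
    Integrable (fun ξ ↦ exp (I * ((⟪ξ, x⟫ : ℝ) : ℂ)) * c ξ) μ := by
  simpa only [Circle.smul_def, fourierChar_neg_expInnerPairing, smul_eq_mul] using
    (Real.fourierIntegral_convergent_iff' expInnerPairing x).2 hc

lemma integrable_inner_mul_exp_inner_mul (hc : AEStronglyMeasurable c μ)
    (hc' : Integrable (fun ξ ↦ ‖ξ‖ * ‖c ξ‖) μ) (x v : V) :
    Integrable (fun ξ ↦ I * ((⟪ξ, v⟫ : ℝ) : ℂ) * exp (I * ((⟪ξ, x⟫ : ℝ) : ℂ)) * c ξ) μ := by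
  refine (hc'.mul_const ‖v‖).mono' (by fun_prop) (.of_forall fun ξ ↦ ?_)
  rw [norm_mul, norm_mul, norm_mul, norm_I, norm_exp_I_mul_ofReal, norm_real, Real.norm_eq_abs,
    one_mul, mul_one]
  calc |⟪ξ, v⟫| * ‖c ξ‖ ≤ ‖ξ‖ * ‖v‖ * ‖c ξ‖ := by gcongr; exact abs_real_inner_le_norm ξ v
    _ = ‖ξ‖ * ‖c ξ‖ * ‖v‖ := by ring

variable [SecondCountableTopology V]

theorem contDiff_integral_exp_inner_mul (hc : Integrable c μ)
    (hc' : Integrable (fun ξ ↦ ‖ξ‖ * ‖c ξ‖) μ) :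
    ContDiff ℝ 1 fun x ↦ ∫ ξ, exp (I * ((⟪ξ, x⟫ : ℝ) : ℂ)) * c ξ ∂μ := by
  simp only [integral_exp_inner_mul_eq_fourierIntegral]
  refine VectorFourier.contDiff_fourierIntegral expInnerPairing fun n hn ↦ ?_
  obtain rfl | rfl : n = 0 ∨ n = 1 := by
    have : n ≤ 1 := mod_cast hn
    omega
  · simpa using hc.norm
  · simpa using hc'

theorem fderiv_integral_exp_inner_mul_apply (hc : Integrable c μ)
    (hc' : Integrable (fun ξ ↦ ‖ξ‖ * ‖c ξ‖) μ) (x v : V) :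
    fderiv ℝ (fun x ↦ ∫ ξ, exp (I * ((⟪ξ, x⟫ : ℝ) : ℂ)) * c ξ ∂μ) x v =
      ∫ ξ, I * ((⟪ξ, v⟫ : ℝ) : ℂ) * exp (I * ((⟪ξ, x⟫ : ℝ) : ℂ)) * c ξ ∂μ := by
  have hSR : Integrable (VectorFourier.fourierSMulRight expInnerPairing c) μ :=
    (hc'.const_mul (2 * π * ‖expInnerPairing (V := V)‖)).mono' hc.1.fourierSMulRight
      (.of_forall fun ξ ↦ (VectorFourier.norm_fourierSMulRight_le _ _ _).trans_eq (by ring))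
  simp only [integral_exp_inner_mul_eq_fourierIntegral,
    (VectorFourier.hasFDerivAt_fourierIntegral expInnerPairing hc hc' x).fderiv,
    Real.fourierIntegral_continuousLinearMap_apply' hSR]
  refine integral_congr_ae (.of_forall fun ξ ↦ ?_)
  simp only [ContinuousLinearMap.toLinearMap₁₂_apply_apply_apply, Circle.smul_def,
    fourierChar_neg_expInnerPairing, VectorFourier.fourierSMulRight_apply, smul_eq_mul, real_smul]
  rw [expInnerPairing_apply]
  push_cast
  field_simp

local notation "ℝ²" => EuclideanSpace ℝ (Fin 2)

lemma measurable_polarAngle : Measurable polarAngle := by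
  unfold polarAngle; fun_prop

lemma measurable_eThetaC : Measurable eThetaC := by
  refine measurable_pi_iff.2 fun j ↦ ?_
  fin_cases j <;> simp [eThetaC] <;> fun_prop

lemma norm_eThetaC_apply_le_one (ξ : ℝ²) (j : Fin 2) : ‖eThetaC ξ j‖ ≤ 1 := by
  have key (i : Fin 2) : |ξ i| / ‖ξ‖ ≤ 1 :=
    div_le_one_of_le₀ (PiLp.norm_apply_le ξ i) (norm_nonneg ξ)
  fin_cases j
  · simpa [eThetaC] using key 1
  · simpa [eThetaC] using key 0

lemma coord_mul_eThetaC_sub (ξ : ℝ²) :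
    (ξ 0 : ℂ) * eThetaC ξ 1 - (ξ 1 : ℂ) * eThetaC ξ 0 = -(‖ξ‖ : ℂ) := by
  rcases eq_or_ne ξ 0 with rfl | hξ
  · simp [eThetaC]
  have hsq : (ξ 0 : ℂ) ^ 2 + (ξ 1 : ℂ) ^ 2 = (‖ξ‖ : ℂ) ^ 2 := by
    exact_mod_cast (by simp [EuclideanSpace.real_norm_sq_eq, Fin.sum_univ_two] :
      ξ 0 ^ 2 + ξ 1 ^ 2 = ‖ξ‖ ^ 2)
  have hξ' : (‖ξ‖ : ℂ) ≠ 0 := by exact_mod_cast norm_ne_zero_iff.2 hξ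
  simp only [eThetaC, Matrix.cons_val_one, Matrix.cons_val_zero, ofReal_div, ofReal_neg]
  field_simp
  linear_combination -hsq

lemma integrable_comp_norm_iff {F : Type*} [NormedAddCommGroup F] [NormedSpace ℝ F]
    {f : ℝ → F} :
    Integrable (fun ξ : ℝ² ↦ f ‖ξ‖) ↔ IntegrableOn (fun ρ ↦ ρ • f ρ) (Ioi 0) := by
  simpa using integrable_fun_norm_addHaar (volume : Measure ℝ²) (f := f)

lemma integrable_of_norm_le_radial {g : ℝ → ℂ} (hg : Measurable g)
    (hint : IntegrableOn (fun ρ ↦ ‖g ρ‖ * (ρ + ρ ^ 2)) (Ioi 0)) {a : ℝ² → ℂ}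
    (ha : AEStronglyMeasurable a) {C : ℝ} (hle : ∀ ξ, ‖a ξ‖ ≤ C * ‖g ‖ξ‖‖) :
    Integrable a ∧ Integrable fun ξ ↦ ‖ξ‖ * ‖a ξ‖ := by
  have hg₁ : Integrable fun ξ : ℝ² ↦ ‖g ‖ξ‖‖ := by
    refine integrable_comp_norm_iff (f := fun ρ ↦ ‖g ρ‖) |>.2 (hint.mono' (by fun_prop) ?_)
    filter_upwards [self_mem_ae_restrict measurableSet_Ioi] with ρ (hρ : 0 < ρ)
    rw [smul_eq_mul, Real.norm_of_nonneg (by positivity)]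
    nlinarith [norm_nonneg (g ρ)]
  have hg₂ : Integrable fun ξ : ℝ² ↦ ‖ξ‖ * ‖g ‖ξ‖‖ := by
    refine integrable_comp_norm_iff (f := fun ρ ↦ ρ * ‖g ρ‖) |>.2 (hint.mono' (by fun_prop) ?_)
    filter_upwards [self_mem_ae_restrict measurableSet_Ioi] with ρ (hρ : 0 < ρ)
    rw [smul_eq_mul, Real.norm_of_nonneg (by positivity)]
    nlinarith [norm_nonneg (g ρ)]
  refine ⟨(hg₁.const_mul C).mono' ha (.of_forall hle), (hg₂.const_mul C).mono' (by fun_prop) ?_⟩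
  refine .of_forall fun ξ ↦ ?_
  rw [Real.norm_of_nonneg (by positivity)]
  nlinarith [hle ξ, norm_nonneg ξ]

theorem vorticity_integral_exp_inner_smul_eThetaC {a : ℝ² → ℂ} (ha : Integrable a)
    (ha' : Integrable fun ξ ↦ ‖ξ‖ * ‖a ξ‖) {ψ : ℝ² → Fin 2 → ℂ}
    (hψ : ∀ x, ψ x = (2 * π)⁻¹ • ∫ ξ, exp (I * ((⟪ξ, x⟫ : ℝ) : ℂ)) • (a ξ • eThetaC ξ)) :
    (ContDiff ℝ 1 fun x ↦ ψ x 0) ∧ (ContDiff ℝ 1 fun x ↦ ψ x 1) ∧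
      ∀ x, fderiv ℝ (fun y ↦ ψ y 1) x (EuclideanSpace.single 0 1) -
          fderiv ℝ (fun y ↦ ψ y 0) x (EuclideanSpace.single 1 1) =
        (2 * π)⁻¹ • ∫ ξ, -I * ‖ξ‖ * a ξ * exp (I * ((⟪ξ, x⟫ : ℝ) : ℂ)) := by
  set c : Fin 2 → ℝ² → ℂ := fun j ξ ↦ a ξ * eThetaC ξ j
  have hc (j : Fin 2) : Integrable (c j) :=
    ha.mul_bdd (measurable_pi_apply j |>.comp measurable_eThetaC).aestronglyMeasurable
      (.of_forall (norm_eThetaC_apply_le_one · j))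
  have hc' (j : Fin 2) : Integrable fun ξ ↦ ‖ξ‖ * ‖c j ξ‖ := by
    refine ha'.mono' (by fun_prop) (.of_forall fun ξ ↦ ?_)
    rw [Real.norm_of_nonneg (by positivity), norm_mul, ← mul_assoc]
    exact mul_le_of_le_one_right (by positivity) (norm_eThetaC_apply_le_one ξ j)
  have hψ_apply (j : Fin 2) :
      (fun x ↦ ψ x j) = fun x ↦ (2 * π)⁻¹ • ∫ ξ, exp (I * ((⟪ξ, x⟫ : ℝ) : ℂ)) * c j ξ := by
    ext x
    rw [hψ, Pi.smul_apply, eval_integral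
      (f := fun ξ ↦ exp (I * ((⟪ξ, x⟫ : ℝ) : ℂ)) • (a ξ • eThetaC ξ))
      fun i ↦ integrable_exp_inner_mul (hc i) x]
    rfl
  have hderiv (j : Fin 2) (x v : ℝ²) : fderiv ℝ (fun y ↦ ψ y j) x v =
      (2 * π)⁻¹ • ∫ ξ, I * ((⟪ξ, v⟫ : ℝ) : ℂ) * exp (I * ((⟪ξ, x⟫ : ℝ) : ℂ)) * c j ξ := by
    rw [hψ_apply, fderiv_fun_const_smul
      ((contDiff_integral_exp_inner_mul (hc j) (hc' j)).differentiable one_ne_zero x),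
      smul_apply, fderiv_integral_exp_inner_mul_apply (hc j) (hc' j)]
  refine ⟨?_, ?_, fun x ↦ ?_⟩
  · rw [hψ_apply]; exact (contDiff_integral_exp_inner_mul (hc 0) (hc' 0)).const_smul _
  · rw [hψ_apply]; exact (contDiff_integral_exp_inner_mul (hc 1) (hc' 1)).const_smul _
  rw [hderiv, hderiv, ← smul_sub, ← integral_sub
    (integrable_inner_mul_exp_inner_mul (hc 1).1 (hc' 1) x _)
    (integrable_inner_mul_exp_inner_mul (hc 0).1 (hc' 0) x _)]
  congr 1
  refine integral_congr_ae (.of_forall fun ξ ↦ ?_)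
  simp only [c, EuclideanSpace.inner_single_right, conj_trivial, one_mul]
  linear_combination (I * a ξ * exp (I * ((⟪ξ, x⟫ : ℝ) : ℂ))) * coord_mul_eThetaC_sub ξ

noncomputable def angularFactor (β : ℤ →₀ ℂ) (θ : ℝ) : ℂ :=
  ∑ m ∈ β.support, β m * exp (I * m * θ)

lemma norm_angularFactor_le (β : ℤ →₀ ℂ) (θ : ℝ) :
    ‖angularFactor β θ‖ ≤ ∑ m ∈ β.support, ‖β m‖ := by
  refine (norm_sum_le _ _).trans (Finset.sum_le_sum fun m _ ↦ ?_)
  rw [norm_mul, norm_exp]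
  simp

lemma continuous_angularFactor (β : ℤ →₀ ℂ) : Continuous (angularFactor β) := by
  unfold angularFactor; fun_prop

/-- The spatial divergence free wavelet `ψ`, the inverse Fourier transform of
`ψ̂(ξ) = -i (∑_m β_m e^{imθ_ξ}) h(|ξ|) e_θ(ξ)`, is continuously differentiable and its
vorticity `∂ψ₂/∂x₁ - ∂ψ₁/∂x₂` has the closed frequency-domain form
`-(2π)⁻¹ ∫ |ξ| (∑_m β_m e^{imθ_ξ}) h(|ξ|) e^{i⟨ξ,x⟩} dξ`. -/
theorem stmt_16 (β : ℤ →₀ ℂ) (h : ℝ → ℂ) (hmeas : Measurable h)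
    (hint : IntegrableOn (fun ρ : ℝ => ‖h ρ‖ * (ρ + ρ ^ 2)) (Set.Ioi (0 : ℝ)))
    (ψ : EuclideanSpace ℝ (Fin 2) → Fin 2 → ℂ)
    (hψ : ∀ x, ψ x = (2 * Real.pi)⁻¹ • ∫ ξ : EuclideanSpace ℝ (Fin 2),
      Complex.exp (Complex.I * ((⟪ξ, x⟫ : ℝ) : ℂ)) •
        (((-Complex.I) *
            (∑ m ∈ β.support, β m * Complex.exp (Complex.I * (m : ℂ) * ((polarAngle ξ : ℝ) : ℂ))) *
            h ‖ξ‖) • eThetaC ξ)) :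
    (ContDiff ℝ 1 fun x => ψ x 0) ∧ (ContDiff ℝ 1 fun x => ψ x 1) ∧
      ∀ x : EuclideanSpace ℝ (Fin 2),
        fderiv ℝ (fun y => ψ y 1) x (EuclideanSpace.single 0 1) -
            fderiv ℝ (fun y => ψ y 0) x (EuclideanSpace.single 1 1)
          = -((2 * Real.pi)⁻¹ • ∫ ξ : EuclideanSpace ℝ (Fin 2),
              ((‖ξ‖ : ℝ) : ℂ) *
                (∑ m ∈ β.support, β m * Complex.exp (Complex.I * (m : ℂ) * ((polarAngle ξ : ℝ) : ℂ))) *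
                h ‖ξ‖ * Complex.exp (Complex.I * ((⟪ξ, x⟫ : ℝ) : ℂ))) := by
  let a (ξ : ℝ²) : ℂ := -I * angularFactor β (polarAngle ξ) * h ‖ξ‖
  have ha_meas : Measurable a :=
    (((continuous_angularFactor β).measurable.comp measurable_polarAngle).const_mul _).mul
      (hmeas.comp measurable_norm)
  have ha_le (ξ : ℝ²) : ‖a ξ‖ ≤ (∑ m ∈ β.support, ‖β m‖) * ‖h ‖ξ‖‖ := by
    rw [norm_mul, norm_mul, norm_neg, norm_I, one_mul]
    gcongr
    exact norm_angularFactor_le β _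
  obtain ⟨ha, ha'⟩ := integrable_of_norm_le_radial hmeas hint ha_meas.aestronglyMeasurable ha_le
  obtain ⟨hψ₀, hψ₁, hcurl⟩ := vorticity_integral_exp_inner_smul_eThetaC ha ha' hψ
  refine ⟨hψ₀, hψ₁, fun x ↦ ?_⟩
  rw [hcurl, ← smul_neg, ← integral_neg]
  congr 1
  refine integral_congr_ae (.of_forall fun ξ ↦ ?_)
  simp only [a, angularFactor]
  linear_combination (‖ξ‖ * (∑ m ∈ β.support, β m * exp (I * m * polarAngle ξ)) * h ‖ξ‖ *
    exp (I * ((⟪ξ, x⟫ : ℝ) : ℂ))) * I_sq
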